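/- arXiv:math/9911032 — 2 statements merged into one kernel-verified Lean document; each statement's English description precedes it below -/
import Mathlib

section
/- Let S be a finite set with {ℓ_i : i ∈ S} distinct odd primes, r = Π ℓ_i, G_S = Gal(ℚ(μ_r)/ℚ) ≅ Π_i (ℤ/ℓ_iℤ)^×, with σ_i generating the inertia subgroup G_i, and let M divide ℓ_i − 1 for all i. For T ⊆ S set D_T = Π_{i∈T} D_i with D_i = Σ_{k=0}^{ℓ_i−2} k σ_i^k, acting on the universal ordinary distribution U_r. Then the element D_T·[Σ_{i∈T} 1/ℓ_i] in U_r/MU_r is fixed by G_S, i.e. lies in H^0(G_S, U_r/MU_r). -/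
noncomputable section

open MonoidAlgebra

variable (S : Type) [Fintype S] [DecidableEq S]

/-- The level, `r = ∏_{i ∈ S} ℓ_i`. -/
def lev (ℓ : S → ℕ) : ℕ := ∏ i, ℓ i

/-- The free abelian group on `(1/r)ℤ/ℤ ≅ ℤ/rℤ`, as a module over the group ring of
the multiplicative monoid `ℤ/rℤ`; the Galois group `(ℤ/rℤ)ˣ` acts by multiplication. -/
abbrev AMod (ℓ : S → ℕ) : Type := MonoidAlgebra ℤ (ZMod (lev S ℓ))

/-- The distribution relations of level `r`: `[a] - ∑_{ℓ_i b = a} [b]` for `i ∈ S`. -/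
def distribRelR (ℓ : S → ℕ) : AddSubgroup (AMod S ℓ) :=
  AddSubgroup.closure
    {z | ∃ (i : S) (y : ZMod (lev S ℓ)),
      z = MonoidAlgebra.single ((ℓ i : ZMod (lev S ℓ)) * y) 1 -
        ∑ j ∈ Finset.range (ℓ i),
          MonoidAlgebra.single
            (y + (j : ZMod (lev S ℓ)) * ((lev S ℓ / ℓ i : ℕ) : ZMod (lev S ℓ))) 1}

/-- The subgroup of `𝒜` whose quotient is `U_r/MU_r`: relations together with
`M`-multiples. -/
def relModM (ℓ : S → ℕ) (M : ℕ) : AddSubgroup (AMod S ℓ) :=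
  distribRelR S ℓ ⊔ (DistribMulAction.toAddMonoidHom (AMod S ℓ) ((M : ℤ))).range

/-- `U_r/MU_r`. -/
def UModM (ℓ : S → ℕ) (M : ℕ) : Type := AMod S ℓ ⧸ relModM S ℓ M

instance (ℓ : S → ℕ) (M : ℕ) : AddCommGroup (UModM S ℓ M) := by
  unfold UModM; infer_instance

/-- The Kolyvagin derivative `D_T = ∏_{i ∈ T} ∑_{k=0}^{ℓ_i - 2} k σ_i^k` applied to
`[∑_{i ∈ T} 1/ℓ_i]`, as an element of the group ring model of `U_r`. -/
def DTelt (ℓ : S → ℕ) (σ : S → (ZMod (lev S ℓ))ˣ) (T : Finset S) : AMod S ℓ :=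
  (∏ i ∈ T, ∑ k ∈ Finset.range (ℓ i - 1),
      MonoidAlgebra.single (((σ i : ZMod (lev S ℓ))) ^ k) (k : ℤ)) *
    MonoidAlgebra.single (∑ i ∈ T, ((lev S ℓ / ℓ i : ℕ) : ZMod (lev S ℓ))) 1

/-!
Multiplication by a unit of `ZMod r` permutes the distribution relations, so `U_r/MU_r` is a
`G_S`-module, and since the `σ_j` generate `G_S` (Chinese remainder theorem) it suffices to show
that each `σ_j` fixes `D_T[a_T]`, `a_T = ∑_{i ∈ T} 1/ℓ_i`; we argue by induction on `T`. If
`j ∉ T`, then `σ_j` fixes `a_T` and commutes with `D_T`. If `j ∈ T`, write `T = T' ∪ {j}` and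
`a = a_{T'}`. From `(σ_j - 1) D_j = (ℓ_j - 1) - N_j` and
`N_j [a + 1/ℓ_j] = ∑_c [a + c/ℓ_j] - [a] ≡ [ℓ_j a] - [a] = (Fr_j - 1)[a]` we get
`(σ_j - 1) D_T [a_T] ≡ -(Fr_j - 1) D_{T'} [a]` modulo `M` and the relations, and the right-hand
side vanishes in `U_r/MU_r` by induction.
-/

namespace Kolyvagin

open MonoidAlgebra
open scoped Function

theorem pairwise_coprime_of_prime {ι : Type*} {ℓ : ι → ℕ} (hp : ∀ i, (ℓ i).Prime)
    (hinj : Function.Injective ℓ) : Pairwise (Nat.Coprime on ℓ) :=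
  fun i j h => (Nat.coprime_primes (hp i) (hp j)).mpr (hinj.ne h)

theorem sum_range_natCast_eq_sum {β : Type*} [AddCommMonoid β] (n : ℕ) [NeZero n]
    (f : ZMod n → β) : ∑ c ∈ Finset.range n, f c = ∑ d, f d :=
  Finset.sum_nbij' (↑) ZMod.val (by simp) (by simp [ZMod.val_lt])
    (fun c hc => ZMod.val_cast_of_lt (Finset.mem_range.mp hc))
    (fun d _ => ZMod.natCast_zmod_val d) (fun _ _ => rfl)

theorem image_range_pow_eq_univ_erase_zero {K : Type*} [Field K] [Fintype K] [DecidableEq K]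
    {n : ℕ} (hn : Fintype.card K = n + 1) {w : K} (hw : orderOf w = n) :
    (Finset.range n).image (w ^ ·) = Finset.univ.erase 0 := by
  have hunit : IsUnit w := IsUnit.of_pow_eq_one (hw ▸ pow_orderOf_eq_one w)
    (by have := Fintype.one_lt_card (α := K); omega)
  refine Finset.eq_of_subset_of_card_le (fun _ hx => ?_) ?_
  · obtain ⟨k, -, rfl⟩ := Finset.mem_image.mp hx
    exact Finset.mem_erase.mpr ⟨(hunit.pow k).ne_zero, Finset.mem_univ _⟩
  · rw [Finset.card_image_of_injOn, Finset.card_erase_of_mem (Finset.mem_univ _),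
      Finset.card_range, Finset.card_univ, hn, Nat.add_sub_cancel]
    exact hw ▸ fun a ha b hb => pow_injOn_Iio_orderOf (by simpa using ha) (by simpa using hb)

theorem sub_one_mul_sum_range_natCast_mul_pow {R : Type*} [CommRing R] (x : R) (n : ℕ) :
    (x - 1) * ∑ k ∈ Finset.range n, (k : R) * x ^ k =
      n * x ^ n - x * ∑ k ∈ Finset.range n, x ^ k := by
  induction n with
  | zero => simp
  | succ n ih =>
    simp only [Finset.sum_range_succ, Nat.cast_succ]
    linear_combination ih

theorem sub_one_mul_sum_range_natCast_mul_pow_of_pow_eq_one {R : Type*} [CommRing R] {x : R}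
    {n : ℕ} (hx : x ^ n = 1) :
    (x - 1) * ∑ k ∈ Finset.range n, (k : R) * x ^ k = n - ∑ k ∈ Finset.range n, x ^ k := by
  linear_combination sub_one_mul_sum_range_natCast_mul_pow x n - geom_sum_mul x n + (n - 1) * hx

section GroupRing

variable {G : Type*}

def kolyDeriv [Monoid G] (g : G) (n : ℕ) : MonoidAlgebra ℤ G :=
  ∑ k ∈ Finset.range n, single (g ^ k) (k : ℤ)

theorem single_sub_one_mul_kolyDeriv [CommMonoid G] {g : G} {n : ℕ} (hg : g ^ n = 1) :
    (single g 1 - 1) * kolyDeriv g n =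
      (n : MonoidAlgebra ℤ G) - ∑ k ∈ Finset.range n, single (g ^ k) (1 : ℤ) := by
  have hpow : ∀ k : ℕ, single (g ^ k) (1 : ℤ) = single g 1 ^ k := fun k => by
    rw [single_pow, one_pow]
  have hterm : ∀ k : ℕ, single (g ^ k) (k : ℤ) = (k : MonoidAlgebra ℤ G) * single g 1 ^ k :=
    fun k => by rw [← hpow, natCast_def, single_mul_single, one_mul, mul_one]
  simp only [kolyDeriv, hterm, hpow]
  exact sub_one_mul_sum_range_natCast_mul_pow_of_pow_eq_one (by rw [single_pow, hg, one_pow]; rfl)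

theorem single_mul_sub_mem_of_closure_eq_top [Monoid G] {N : AddSubgroup (MonoidAlgebra ℤ G)}
    (hN : ∀ u : Gˣ, ∀ z ∈ N, single (u : G) 1 * z ∈ N) {s : Set Gˣ}
    (hs : Subgroup.closure s = ⊤) {z : MonoidAlgebra ℤ G}
    (hz : ∀ u ∈ s, single (u : G) 1 * z - z ∈ N) (u : Gˣ) : single (u : G) 1 * z - z ∈ N := by
  have hsingle : ∀ a b : Gˣ,
      single ((a * b : Gˣ) : G) (1 : ℤ) = single (a : G) 1 * single (b : G) 1 :=
    fun a b => by rw [single_mul_single, one_mul, Units.val_mul]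
  refine Subgroup.closure_induction (p := fun (u : Gˣ) _ => single (u : G) 1 * z - z ∈ N)
    hz ?_ (fun a b _ _ ha hb => ?_) (fun a _ ha => ?_) (hs.ge (Subgroup.mem_top u))
  · rw [Units.val_one, ← one_def, one_mul, sub_self]
    exact zero_mem N
  · rw [hsingle, mul_assoc]
    simpa only [mul_sub, sub_add_sub_cancel] using add_mem (hN a _ hb) ha
  · have h := neg_mem (hN a⁻¹ _ ha)
    rwa [mul_sub, ← mul_assoc, ← hsingle, inv_mul_cancel, Units.val_one, ← one_def, one_mul,
      neg_sub] at h

theorem kolyDeriv_mul_mem [Monoid G] {N : AddSubgroup (MonoidAlgebra ℤ G)}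
    (hN : ∀ u : Gˣ, ∀ z ∈ N, single (u : G) 1 * z ∈ N) (g : Gˣ) (n : ℕ)
    {z : MonoidAlgebra ℤ G} (hz : z ∈ N) : kolyDeriv (g : G) n * z ∈ N := by
  rw [kolyDeriv, Finset.sum_mul]
  refine sum_mem fun k _ => ?_
  rw [show single ((g : G) ^ k) (k : ℤ) = (k : ℤ) • single ((g ^ k : Gˣ) : G) 1 by
    rw [smul_single, smul_eq_mul, mul_one, Units.val_pow_eq_pow_val], smul_mul_assoc]
  exact N.zsmul_mem (hN _ z hz) _

theorem prod_kolyDeriv_mul_mem [CommMonoid G] {N : AddSubgroup (MonoidAlgebra ℤ G)} {ι : Type*}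
    (hN : ∀ u : Gˣ, ∀ z ∈ N, single (u : G) 1 * z ∈ N)
    (g : ι → Gˣ) (n : ι → ℕ) (T : Finset ι) {z : MonoidAlgebra ℤ G} (hz : z ∈ N) :
    (∏ i ∈ T, kolyDeriv (g i : G) (n i)) * z ∈ N := by
  refine Finset.prod_induction _ (fun a => ∀ z ∈ N, a * z ∈ N) (fun a b ha hb z hz => ?_)
    (fun z hz => by rwa [one_mul]) (fun i _ z hz => kolyDeriv_mul_mem hN (g i) (n i) hz) z hz
  rw [mul_assoc]
  exact ha _ (hb z hz)

end GroupRing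

section Level

variable {ι : Type} [Fintype ι] (ℓ : ι → ℕ)

abbrev red (i : ι) : ZMod (lev ι ℓ) →+* ZMod (ℓ i) :=
  ZMod.castHom (Finset.dvd_prod_of_mem ℓ (Finset.mem_univ i)) _

/-- The class of `1/ℓ_i` under `ZMod r ≅ (1/r)ℤ/ℤ`. -/
def frac (i : ι) : ZMod (lev ι ℓ) := ((lev ι ℓ / ℓ i : ℕ) : ZMod (lev ι ℓ))

variable {ℓ}

theorem dvd_lev_div {i k : ι} (h : k ≠ i) : ℓ k ∣ lev ι ℓ / ℓ i := by
  classical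
  refine Nat.dvd_div_of_mul_dvd ?_
  rw [← Finset.prod_pair h.symm]
  exact Finset.prod_dvd_prod_of_subset _ _ ℓ (Finset.subset_univ _)

theorem red_frac_of_ne {i k : ι} (h : k ≠ i) : red ℓ k (frac ℓ i) = 0 := by
  rw [frac, map_natCast, ZMod.natCast_eq_zero_iff]
  exact dvd_lev_div h

theorem red_eq_one_of_castHom_eq_one {i k : ι} {x : ZMod (lev ι ℓ)}
    (hx : ∀ hd : lev ι ℓ / ℓ i ∣ lev ι ℓ, ZMod.castHom hd (ZMod (lev ι ℓ / ℓ i)) x = 1)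
    (h : k ≠ i) : red ℓ k x = 1 := by
  have hd : lev ι ℓ / ℓ i ∣ lev ι ℓ :=
    Nat.div_dvd_of_dvd (Finset.dvd_prod_of_mem ℓ (Finset.mem_univ i))
  change ZMod.castHom _ _ x = 1
  rw [← ZMod.castHom_comp (dvd_lev_div h) hd, RingHom.comp_apply, hx, map_one]

theorem eq_of_red_eq (hcop : Pairwise (Nat.Coprime on ℓ)) {x y : ZMod (lev ι ℓ)}
    (h : ∀ i, red ℓ i x = red ℓ i y) : x = y :=
  (ZMod.prodEquivPi ℓ hcop).injective <| funext fun i =>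
    (ZMod.prodEquivPi_apply ℓ hcop x i).trans <|
      (h i).trans (ZMod.prodEquivPi_apply ℓ hcop y i).symm

theorem mul_frac_congr (hcop : Pairwise (Nat.Coprime on ℓ)) {i : ι} {x y : ZMod (lev ι ℓ)}
    (h : red ℓ i x = red ℓ i y) : x * frac ℓ i = y * frac ℓ i := by
  classical
  refine eq_of_red_eq hcop fun k => ?_
  by_cases hk : k = i
  · subst hk; rw [map_mul, map_mul, h]
  · rw [map_mul, map_mul, red_frac_of_ne hk, mul_zero, mul_zero]

theorem mul_sum_frac_congr (hcop : Pairwise (Nat.Coprime on ℓ)) {T : Finset ι}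
    {x y : ZMod (lev ι ℓ)} (h : ∀ i ∈ T, red ℓ i x = red ℓ i y) :
    x * ∑ i ∈ T, frac ℓ i = y * ∑ i ∈ T, frac ℓ i := by
  simp only [Finset.mul_sum]
  exact Finset.sum_congr rfl fun i hi => mul_frac_congr hcop (h i hi)

theorem mul_frac_eq_val_mul_frac (hcop : Pairwise (Nat.Coprime on ℓ)) {i : ι} [NeZero (ℓ i)]
    (x : ZMod (lev ι ℓ)) : x * frac ℓ i = ((red ℓ i x).val : ZMod (lev ι ℓ)) * frac ℓ i :=
  mul_frac_congr hcop <| by rw [map_natCast, ZMod.natCast_zmod_val]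

/-- A Frobenius at `ℓ_j`. -/
theorem exists_unit_red_eq_of_ne [DecidableEq ι] (hcop : Pairwise (Nat.Coprime on ℓ)) (j : ι) :
    ∃ v : (ZMod (lev ι ℓ))ˣ, ∀ k, k ≠ j → red ℓ k v = ℓ j := by
  let e := ZMod.prodEquivPi ℓ hcop
  let w : ∀ k, ZMod (ℓ k) := fun k => if k = j then 1 else ℓ j
  have hw : IsUnit (e.symm w) := by
    refine (isUnit_map_iff e.symm w).mpr (Pi.isUnit_iff.mpr fun k => ?_)
    by_cases hk : k = j
    · simp [w, hk]
    · simpa [w, hk, ZMod.isUnit_iff_coprime] using hcop (Ne.symm hk)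
  refine ⟨hw.unit, fun k hk => ?_⟩
  have h := ZMod.prodEquivPi_apply ℓ hcop (e.symm w) k
  rw [RingEquiv.apply_symm_apply] at h
  exact h.symm.trans (if_neg hk)

theorem orderOf_red_eq (hcop : Pairwise (Nat.Coprime on ℓ)) {i : ι} {x : ZMod (lev ι ℓ)}
    (hx : ∀ k, k ≠ i → red ℓ k x = 1) : orderOf (red ℓ i x) = orderOf x := by
  classical
  refine orderOf_eq_orderOf_iff.mpr fun n => ⟨fun h => eq_of_red_eq hcop fun k => ?_,
    fun h => by rw [← map_pow, h, map_one]⟩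
  by_cases hk : k = i
  · subst hk; rw [map_pow, h, map_one]
  · rw [map_pow, hx k hk, one_pow, map_one]

theorem closure_range_eq_top (hp : ∀ i, (ℓ i).Prime) (hcop : Pairwise (Nat.Coprime on ℓ))
    (σ : ι → (ZMod (lev ι ℓ))ˣ) (hσ : ∀ i k, k ≠ i → red ℓ k (σ i) = 1)
    (hσord : ∀ i, orderOf (σ i) = ℓ i - 1) :
    Subgroup.closure (Set.range σ) = ⊤ := by
  classical
  let ρ : ∀ i, (ZMod (lev ι ℓ))ˣ →* (ZMod (ℓ i))ˣ := fun i => Units.map (red ℓ i).toMonoidHom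
  have hρσ : ∀ i j, j ≠ i → ρ i (σ j) = 1 := fun i j h => Units.ext (hσ j i h.symm)
  have hgen : ∀ i, Subgroup.zpowers (ρ i (σ i)) = ⊤ := fun i => by
    have := Fact.mk (hp i)
    refine Subgroup.eq_top_of_card_eq _ ?_
    rw [Nat.card_zpowers, ← orderOf_units, Units.coe_map, RingHom.toMonoidHom_eq_coe,
      MonoidHom.coe_coe, orderOf_red_eq hcop (hσ i), orderOf_units, hσord,
      Nat.card_eq_fintype_card, ZMod.card_units]
  refine eq_top_iff.mpr fun u _ => ?_
  choose k hk using fun i => Subgroup.mem_zpowers_iff.mp ((hgen i).ge (Subgroup.mem_top (ρ i u)))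
  have hu : u = ∏ i, σ i ^ k i := Units.ext <| eq_of_red_eq hcop fun i => by
    change ((ρ i u : (ZMod (ℓ i))ˣ) : ZMod (ℓ i)) = ρ i (∏ j, σ j ^ k j)
    rw [map_prod, Finset.prod_eq_single i (fun j _ hj => by rw [map_zpow, hρσ i j hj, one_zpow])
      (fun h => absurd (Finset.mem_univ i) h), map_zpow, hk]
  rw [hu]
  exact Subgroup.prod_mem _ fun i _ =>
    Subgroup.zpow_mem _ (Subgroup.subset_closure (Set.mem_range_self i)) _

section Sums

variable {β : Type*} [AddCommMonoid β]

theorem sum_range_mul_frac (hcop : Pairwise (Nat.Coprime on ℓ)) (i : ι) [NeZero (ℓ i)]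
    (F : ZMod (lev ι ℓ) → β) :
    ∑ c ∈ Finset.range (ℓ i), F (c * frac ℓ i) = ∑ d : ZMod (ℓ i), F (d.val * frac ℓ i) := by
  rw [← sum_range_natCast_eq_sum]
  refine Finset.sum_congr rfl fun c _ => ?_
  rw [mul_frac_eq_val_mul_frac hcop, map_natCast]

theorem sum_range_unit_mul_frac (hcop : Pairwise (Nat.Coprime on ℓ)) (i : ι) [NeZero (ℓ i)]
    {x : ZMod (lev ι ℓ)} (hx : IsUnit (red ℓ i x)) (F : ZMod (lev ι ℓ) → β) :
    ∑ c ∈ Finset.range (ℓ i), F (x * (c * frac ℓ i)) =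
      ∑ c ∈ Finset.range (ℓ i), F (c * frac ℓ i) := by
  rw [sum_range_mul_frac hcop i (fun t => F (x * t)), sum_range_mul_frac hcop i F]
  refine Fintype.sum_equiv (Units.mulLeft hx.unit) _ _ fun d => ?_
  rw [← mul_assoc, mul_frac_eq_val_mul_frac hcop, map_mul, map_natCast, ZMod.natCast_zmod_val]
  rfl

theorem sum_range_pow_mul_frac_add (hcop : Pairwise (Nat.Coprime on ℓ)) {i : ι}
    (hp : (ℓ i).Prime) {g : ZMod (lev ι ℓ)} (hg : orderOf (red ℓ i g) = ℓ i - 1)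
    (F : ZMod (lev ι ℓ) → β) :
    ∑ k ∈ Finset.range (ℓ i - 1), F (g ^ k * frac ℓ i) + F 0 =
      ∑ c ∈ Finset.range (ℓ i), F (c * frac ℓ i) := by
  classical
  have := Fact.mk hp
  have hcard : Fintype.card (ZMod (ℓ i)) = ℓ i - 1 + 1 := by
    rw [ZMod.card]; have := hp.two_le; omega
  rw [sum_range_mul_frac hcop i F, ← Finset.sum_erase_add _ _ (Finset.mem_univ 0),
    ← image_range_pow_eq_univ_erase_zero hcard hg, Finset.sum_image fun a ha b hb =>
      pow_injOn_Iio_orderOf (by simpa [hg] using ha) (by simpa [hg] using hb)]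
  congr 1
  · refine Finset.sum_congr rfl fun k _ => ?_
    rw [mul_frac_eq_val_mul_frac hcop, map_pow]
  · rw [ZMod.val_zero, Nat.cast_zero, zero_mul]

end Sums

theorem single_sub_sum_mem_distribRelR (i : ι) (y : ZMod (lev ι ℓ)) :
    single ((ℓ i : ZMod (lev ι ℓ)) * y) 1 -
        ∑ c ∈ Finset.range (ℓ i), single (y + c * frac ℓ i) 1 ∈ distribRelR ι ℓ :=
  AddSubgroup.subset_closure ⟨i, y, rfl⟩

theorem single_mul_mem_distribRelR (hcop : Pairwise (Nat.Coprime on ℓ)) [∀ i, NeZero (ℓ i)]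
    {x : ZMod (lev ι ℓ)} (hx : IsUnit x) {z : AMod ι ℓ} (hz : z ∈ distribRelR ι ℓ) :
    single x 1 * z ∈ distribRelR ι ℓ := by
  refine AddSubgroup.closure_induction (fun _ ⟨i, y, hw⟩ => ?_)
    (by rw [mul_zero]; exact zero_mem _)
    (fun a b _ _ ha hb => by rw [mul_add]; exact add_mem ha hb)
    (fun a _ ha => by rw [mul_neg]; exact neg_mem ha) hz
  have h := single_sub_sum_mem_distribRelR i (x * y)
  rw [← sum_range_unit_mul_frac hcop i (hx.map (red ℓ i))
    (fun t => single (x * y + t) (1 : ℤ))] at h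
  convert h using 1
  rw [hw]
  simp only [mul_sub, Finset.mul_sum, single_mul_single, one_mul, mul_add, mul_left_comm x]
  rfl

theorem single_mul_mem_relModM (hcop : Pairwise (Nat.Coprime on ℓ)) [∀ i, NeZero (ℓ i)]
    (M : ℕ) (u : (ZMod (lev ι ℓ))ˣ) {z : AMod ι ℓ} (hz : z ∈ relModM ι ℓ M) :
    single (u : ZMod (lev ι ℓ)) 1 * z ∈ relModM ι ℓ M := by
  obtain ⟨y, hy, _, ⟨w, rfl⟩, rfl⟩ := AddSubgroup.mem_sup.mp hz
  rw [mul_add]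
  refine add_mem (AddSubgroup.mem_sup_left (single_mul_mem_distribRelR hcop u.isUnit hy))
    (AddSubgroup.mem_sup_right ⟨single (u : ZMod (lev ι ℓ)) 1 * w, ?_⟩)
  exact (mul_smul_comm _ _ _).symm

theorem natCast_mul_mem_relModM {M n : ℕ} (h : M ∣ n) (z : AMod ι ℓ) :
    (n : AMod ι ℓ) * z ∈ relModM ι ℓ M := by
  obtain ⟨q, rfl⟩ := h
  refine AddSubgroup.mem_sup_right ⟨(q : ℤ) • z, ?_⟩
  change (M : ℤ) • (q : ℤ) • z = _
  rw [smul_smul, ← Nat.cast_mul, ← nsmul_eq_mul, natCast_zsmul]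

theorem sum_single_pow_mul_single (hcop : Pairwise (Nat.Coprime on ℓ)) {j : ι}
    (hp : (ℓ j).Prime) {g : ZMod (lev ι ℓ)} (hg : orderOf (red ℓ j g) = ℓ j - 1)
    {a : ZMod (lev ι ℓ)} (ha : ∀ k : ℕ, g ^ k * a = a) :
    (∑ k ∈ Finset.range (ℓ j - 1), single (g ^ k) (1 : ℤ)) * single (a + frac ℓ j) 1 =
      ∑ c ∈ Finset.range (ℓ j), single (a + c * frac ℓ j) 1 - single a 1 := by
  rw [eq_sub_iff_add_eq, Finset.sum_mul]
  simpa only [single_mul_single, one_mul, mul_add, ha, add_zero] using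
    sum_range_pow_mul_frac_add hcop hp hg (fun t => single (a + t) (1 : ℤ))

theorem DTelt_eq (σ : ι → (ZMod (lev ι ℓ))ˣ) (T : Finset ι) :
    DTelt ι ℓ σ T =
      (∏ i ∈ T, kolyDeriv (σ i : ZMod (lev ι ℓ)) (ℓ i - 1)) * single (∑ i ∈ T, frac ℓ i) 1 :=
  rfl

theorem single_mul_DTelt_of_not_mem (hcop : Pairwise (Nat.Coprime on ℓ))
    {σ : ι → (ZMod (lev ι ℓ))ˣ} {j : ι} (hσ : ∀ k, k ≠ j → red ℓ k (σ j) = 1) {T : Finset ι}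
    (hj : j ∉ T) : single (σ j : ZMod (lev ι ℓ)) 1 * DTelt ι ℓ σ T = DTelt ι ℓ σ T := by
  rw [DTelt_eq, mul_left_comm, single_mul_single, one_mul,
    mul_sum_frac_congr hcop (y := 1) fun i hi => by
      rw [map_one, hσ i (ne_of_mem_of_not_mem hi hj)],
    one_mul]

theorem single_mul_DTelt_sub_mem_of_mem [DecidableEq ι] (hp : ∀ i, (ℓ i).Prime)
    (hcop : Pairwise (Nat.Coprime on ℓ)) {M : ℕ} {σ : ι → (ZMod (lev ι ℓ))ˣ}
    (hσ : ∀ i k, k ≠ i → red ℓ k (σ i) = 1) {j : ι} (hMd : M ∣ ℓ j - 1)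
    (hσord : orderOf (σ j) = ℓ j - 1) {T : Finset ι} (hj : j ∈ T)
    (IH : ∀ v : (ZMod (lev ι ℓ))ˣ,
      single (v : ZMod (lev ι ℓ)) 1 * DTelt ι ℓ σ (T.erase j) - DTelt ι ℓ σ (T.erase j)
        ∈ relModM ι ℓ M) :
    single (σ j : ZMod (lev ι ℓ)) 1 * DTelt ι ℓ σ T - DTelt ι ℓ σ T ∈ relModM ι ℓ M := by
  have : ∀ i, NeZero (ℓ i) := fun i => ⟨(hp i).ne_zero⟩
  set P := ∏ i ∈ T.erase j, kolyDeriv (σ i : ZMod (lev ι ℓ)) (ℓ i - 1)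
  set a := ∑ i ∈ T.erase j, frac ℓ i
  have hDT : DTelt ι ℓ σ T =
      kolyDeriv (σ j : ZMod (lev ι ℓ)) (ℓ j - 1) * (P * single (a + frac ℓ j) 1) := by
    rw [DTelt_eq, ← Finset.mul_prod_erase T _ hj, ← Finset.sum_erase_add T _ hj, mul_assoc]
  have hσa : ∀ k : ℕ, (σ j : ZMod (lev ι ℓ)) ^ k * a = a := fun k =>
    (mul_sum_frac_congr hcop (y := 1) fun i hi => by
      rw [map_pow, hσ j i (Finset.ne_of_mem_erase hi), one_pow, map_one]).trans (one_mul a)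
  obtain ⟨v, hv⟩ := exists_unit_red_eq_of_ne hcop j
  have hva : single (v : ZMod (lev ι ℓ)) 1 * single a 1 =
      single ((ℓ j : ZMod (lev ι ℓ)) * a) (1 : ℤ) := by
    rw [single_mul_single, one_mul, mul_sum_frac_congr hcop (y := (ℓ j : ZMod (lev ι ℓ)))
      fun i hi => by rw [hv i (Finset.ne_of_mem_erase hi), map_natCast]]
  have hkey := single_sub_one_mul_kolyDeriv (g := (σ j : ZMod (lev ι ℓ))) (n := ℓ j - 1)
    (by rw [← Units.val_pow_eq_pow_val, ← hσord, pow_orderOf_eq_one, Units.val_one])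
  have hnorm := sum_single_pow_mul_single hcop (hp j)
    (by rw [orderOf_red_eq hcop (hσ j), orderOf_units, hσord]) hσa
  have hdecomp : single (σ j : ZMod (lev ι ℓ)) 1 * DTelt ι ℓ σ T - DTelt ι ℓ σ T =
      ((ℓ j - 1 : ℕ) : AMod ι ℓ) * (P * single (a + frac ℓ j) 1) +
        P * (single ((ℓ j : ZMod (lev ι ℓ)) * a) 1 -
          ∑ c ∈ Finset.range (ℓ j), single (a + c * frac ℓ j) 1) -
        (single (v : ZMod (lev ι ℓ)) 1 * DTelt ι ℓ σ (T.erase j) - DTelt ι ℓ σ (T.erase j)) := by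
    rw [hDT, DTelt_eq]
    linear_combination (P * single (a + frac ℓ j) 1) * hkey - P * hnorm + P * hva
  rw [hdecomp]
  refine sub_mem (add_mem (natCast_mul_mem_relModM hMd _) ?_) (IH v)
  exact prod_kolyDeriv_mul_mem (single_mul_mem_relModM hcop M) _ _ _
    (AddSubgroup.mem_sup_left (single_sub_sum_mem_distribRelR j a))

end Level

end Kolyvagin

open Kolyvagin

theorem DT_elt_is_invariant (ℓ : S → ℕ)
    (hp : ∀ i, (ℓ i).Prime) (hinj : Function.Injective ℓ)
    (M : ℕ) (hMd : ∀ i, M ∣ ℓ i - 1)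
    (σ : S → (ZMod (lev S ℓ))ˣ)
    (hσ1 : ∀ (i : S) (h : lev S ℓ / ℓ i ∣ lev S ℓ),
      ZMod.castHom h (ZMod (lev S ℓ / ℓ i)) (σ i : ZMod (lev S ℓ)) = 1)
    (hσord : ∀ i, orderOf (σ i) = ℓ i - 1)
    (T : Finset S) (u : (ZMod (lev S ℓ))ˣ) :
    QuotientAddGroup.mk' (relModM S ℓ M)
        (MonoidAlgebra.single ((u : ZMod (lev S ℓ))) 1 * DTelt S ℓ σ T) =
      QuotientAddGroup.mk' (relModM S ℓ M) (DTelt S ℓ σ T) := by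
  have hcop := pairwise_coprime_of_prime hp hinj
  have : ∀ i, NeZero (ℓ i) := fun i => ⟨(hp i).ne_zero⟩
  have hσ : ∀ i k, k ≠ i → red ℓ k (σ i) = 1 := fun i _ => red_eq_one_of_castHom_eq_one (hσ1 i)
  rw [QuotientAddGroup.mk'_apply, QuotientAddGroup.mk'_apply, QuotientAddGroup.eq_iff_sub_mem]
  induction T using Finset.strongInduction generalizing u with
  | H T IH =>
    refine single_mul_sub_mem_of_closure_eq_top (single_mul_mem_relModM hcop M)
      (closure_range_eq_top hp hcop σ hσ hσord) ?_ u
    rintro _ ⟨j, rfl⟩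
    by_cases hj : j ∈ T
    · exact single_mul_DTelt_sub_mem_of_mem hp hcop hσ (hMd j) (hσord j) hj
        (IH _ (Finset.erase_ssubset hj))
    · rw [single_mul_DTelt_of_not_mem hcop (hσ j) hj, sub_self]
      exact zero_mem _
end
end

section
/- (Combinatorial acyclicity lemma.) Let S be a finite set with a total order, |S| = s, and let {B_{T''}}_{T'' ⊆ S} be a family of abelian groups. For T ⊆ S define A_T = ⊕_{T'' ⊆ T} B_{T''}, and for a fixed T ⊆ S define the cochain complex C•_{S,T} with C^n = ⊕_{|T'| = s−n, T' ⊇ S∖T} A_{T'} and differential sending x ∈ A_{T'} to Σ_{i ∈ T'∩T} (−1)^{|{j ∈ T'∩T : j < i}|} x|_{T'∖{i}}, where x|_{T'∖{i}} denotes the natural projection A_{T'} → A_{T'∖{i}}. Then H^n(C•_{S,T}) = 0 for n ≠ 0 and H^0(C•_{S,T}) ≅ ⊕_{T' ⊇ T} B_{T'}. -/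
/-!
For a fixed `T''`, the `B_{T''}`-components of `C•_{S,T}` form the augmented cochain complex of
the full simplex on `T ∖ T''`. If `T ∖ T''` is nonempty, coning off its least element `m` is a
contracting homotopy `h` with `d h + h d = id`, which gives exactness in positive degrees. In
degree `0` the same identity kills every component with `T ⊄ T''` of a cocycle, so `H^0` is the
sum of the `B_{T'}` with `T' ⊇ T`.
-/

noncomputable section

variable {ι : Type} [Fintype ι] [LinearOrder ι]
variable (B : Finset ι → Type) [∀ T'', AddCommGroup (B T'')]

/-- `A_T = ⊕_{T'' ⊆ T} B_{T''}`. -/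
abbrev AT (T' : Finset ι) : Type := ∀ T'' : {T'' : Finset ι // T'' ⊆ T'}, B T''.val

/-- The natural projection `A_{T₂} → A_{T₁}` for `T₁ ⊆ T₂` (killing the summands
`B_{T''}` with `T'' ⊄ T₁`). -/
def projAT {T₁ T₂ : Finset ι} (h : T₁ ⊆ T₂) (x : AT B T₂) : AT B T₁ :=
  fun T'' => x ⟨T''.val, T''.prop.trans h⟩

/-- The `n`-th term `C^n = ⊕_{|T'| = s - n, T' ⊇ S ∖ T} A_{T'}` of the complex
`C•_{S,T}`. -/
abbrev Cn (T : Finset ι) (n : ℕ) : Type :=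
  ∀ T' : {T' : Finset ι // Finset.univ \ T ⊆ T' ∧ T'.card + n = Fintype.card ι},
    AT B T'.val

/-- The differential of `C•_{S,T}`: the component of `d x` at `T₁` is
`∑_{i ∈ T ∖ T₁} (-1)^{|{j ∈ (insert i T₁) ∩ T : j < i}|} (x_{insert i T₁})|_{T₁}`. -/
def ddC (T : Finset ι) (n : ℕ) : Cn B T n →+ Cn B T (n + 1) :=
  AddMonoidHom.mk'
    (fun x T₁ =>
      ∑ i ∈ (T \ T₁.val).attach,
        haveI hins : Finset.univ \ T ⊆ insert (i : ι) T₁.val ∧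
            (insert (i : ι) T₁.val).card + n = Fintype.card ι := by
          constructor
          · exact T₁.prop.1.trans (Finset.subset_insert _ _)
          · rw [Finset.card_insert_of_notMem (Finset.mem_sdiff.mp i.prop).2]
            have := T₁.prop.2
            omega
        ((-1 : ℤ) ^ ((T₁.val ∩ T).filter (· < (i : ι))).card) •
          projAT B (Finset.subset_insert (i : ι) T₁.val) (x ⟨insert (i : ι) T₁.val, hins⟩))
    (by
      intro x y
      funext T₁ T''
      simp [projAT, Finset.sum_apply, smul_add, Finset.sum_add_distrib])

open Finset

section Sign

variable {α : Type*} [LinearOrder α]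

/-- The sign with which `ddC` inserts `i` into `U`. -/
def koszulSign (T U : Finset α) (i : α) : ℤ := (-1) ^ #{j ∈ U ∩ T | j < i}

theorem koszulSign_mul_self (T U : Finset α) (i : α) : koszulSign T U i * koszulSign T U i = 1 := by
  rw [koszulSign, ← pow_add]
  exact Even.neg_one_pow ⟨_, rfl⟩

theorem koszulSign_smul_smul {M : Type*} [AddCommGroup M] (T U : Finset α) (i : α) (v : M) :
    koszulSign T U i • koszulSign T U i • v = v := by
  rw [smul_smul, koszulSign_mul_self, one_smul]

theorem koszulSign_insert_of_lt (T U : Finset α) {i j : α} (hij : i < j) :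
    koszulSign T (insert j U) i = koszulSign T U i := by
  unfold koszulSign
  by_cases hj : j ∈ T
  · rw [insert_inter_of_mem hj, filter_insert, if_neg (not_lt.mpr hij.le)]
  · rw [insert_inter_of_notMem hj]

theorem koszulSign_insert_of_gt {T U : Finset α} {i j : α} (hij : i < j) (hi : i ∈ T)
    (hiU : i ∉ U) : koszulSign T (insert i U) j = -koszulSign T U j := by
  unfold koszulSign
  rw [insert_inter_of_mem hi, filter_insert, if_pos hij,
    card_insert_of_notMem (by simp [hiU]), pow_succ, mul_neg_one]

theorem koszulSign_mul_koszulSign_insert {T U : Finset α} {i j : α} (hi : i ∈ T) (hj : j ∈ T)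
    (hiU : i ∉ U) (hjU : j ∉ U) (hij : i ≠ j) :
    koszulSign T U i * koszulSign T (insert i U) j =
      -(koszulSign T U j * koszulSign T (insert j U) i) := by
  rcases hij.lt_or_gt with h | h
  · rw [koszulSign_insert_of_gt h hi hiU, koszulSign_insert_of_lt T U h]; ring
  · rw [koszulSign_insert_of_lt T U h, koszulSign_insert_of_gt h hj hjU]; ring

theorem koszulSign_insert_mul_koszulSign_insert {T U : Finset α} {i j : α} (hi : i ∈ T)
    (hj : j ∈ T) (hiU : i ∉ U) (hjU : j ∉ U) (hij : i ≠ j) :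
    koszulSign T (insert j U) i * koszulSign T (insert i U) j =
      -(koszulSign T U j * koszulSign T U i) := by
  rcases hij.lt_or_gt with h | h
  · rw [koszulSign_insert_of_lt T U h, koszulSign_insert_of_gt h hi hiU]; ring
  · rw [koszulSign_insert_of_gt h hj hjU, koszulSign_insert_of_lt T U h]; ring

end Sign

theorem Finset.sum_sum_erase_eq_zero_of_antisymm {α M : Type*} [DecidableEq α] [AddCommGroup M]
    {s : Finset α} {f : α → α → M} (hf : ∀ i ∈ s, ∀ j ∈ s, i ≠ j → f j i = -f i j) :
    ∑ i ∈ s, ∑ j ∈ s.erase i, f i j = 0 := by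
  rw [sum_sigma']
  refine sum_involution (fun p _ => ⟨p.2, p.1⟩) ?_ ?_ ?_ ?_
  · rintro ⟨i, j⟩ hp
    simp only [mem_sigma, mem_erase] at hp
    rw [hf i hp.1 j hp.2.2 hp.2.1.symm, add_neg_cancel]
  · rintro ⟨i, j⟩ hp - h
    simp only [mem_sigma, mem_erase] at hp
    exact hp.2.1 (congrArg Sigma.fst h)
  · rintro ⟨i, j⟩ hp
    simp only [mem_sigma, mem_erase] at hp ⊢
    exact ⟨hp.2.2, hp.2.1.symm, hp.1⟩
  · intro p _
    rfl

/-- `T₁` indexes a summand `A_{T₁}` of `C^n`. -/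
abbrev IsCnIndex (T : Finset ι) (n : ℕ) (T₁ : Finset ι) : Prop :=
  univ \ T ⊆ T₁ ∧ T₁.card + n = Fintype.card ι

namespace IsCnIndex

variable {T T₁ T'' : Finset ι} {n : ℕ} {i : ι}

theorem insert (h : IsCnIndex T (n + 1) T₁) (hi : i ∈ T \ T₁) : IsCnIndex T n (insert i T₁) := by
  refine ⟨h.1.trans (subset_insert _ _), ?_⟩
  rw [card_insert_of_notMem (mem_sdiff.mp hi).2]
  exact (add_right_comm _ _ _).trans h.2

theorem erase (h : IsCnIndex T n T₁) (hiT : i ∈ T) (hi : i ∈ T₁) :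
    IsCnIndex T (n + 1) (T₁.erase i) := by
  refine ⟨subset_erase.mpr ⟨h.1, by simp [hiT]⟩, ?_⟩
  rw [← h.2, ← card_erase_add_one hi]
  ring

theorem sdiff_nonempty (h : IsCnIndex T (n + 1) T₁) (h'' : T'' ⊆ T₁) : (T \ T'').Nonempty := by
  rw [Finset.sdiff_nonempty]
  intro hT
  have huniv : T₁ = univ := eq_univ_of_forall fun a => by
    by_cases ha : a ∈ T
    · exact h'' (hT ha)
    · exact h.1 (mem_sdiff.mpr ⟨mem_univ a, ha⟩)
  have := h.2
  rw [huniv, card_univ] at this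
  omega

theorem eq_univ (h : IsCnIndex T 0 T₁) : T₁ = univ :=
  eq_univ_of_card T₁ h.2

end IsCnIndex

theorem isCnIndex_univ (T : Finset ι) : IsCnIndex T 0 univ :=
  ⟨subset_univ _, card_univ⟩

variable {B}

/-- The component of `x` in the summand `B_{T''}` of `A_{T₁}`, extended by zero to all pairs
`(T₁, T'')`, so that it can be rewritten along equalities of finite sets. -/
def coord {T : Finset ι} {n : ℕ} (x : Cn B T n) (T₁ T'' : Finset ι) : B T'' :=
  if h : IsCnIndex T n T₁ ∧ T'' ⊆ T₁ then x ⟨T₁, h.1⟩ ⟨T'', h.2⟩ else 0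

section Coord

variable {T : Finset ι} {n : ℕ}

theorem coord_of_isCnIndex (x : Cn B T n) {T₁ T'' : Finset ι} (h : IsCnIndex T n T₁)
    (h'' : T'' ⊆ T₁) : coord x T₁ T'' = x ⟨T₁, h⟩ ⟨T'', h''⟩ :=
  dif_pos ⟨h, h''⟩

theorem Cn.ext_coord {x y : Cn B T n}
    (h : ∀ T₁ T'', IsCnIndex T n T₁ → T'' ⊆ T₁ → coord x T₁ T'' = coord y T₁ T'') : x = y := by
  funext ⟨T₁, h₁⟩ ⟨T'', h''⟩
  rw [← coord_of_isCnIndex x h₁ h'', ← coord_of_isCnIndex y h₁ h'', h T₁ T'' h₁ h'']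

@[simp]
theorem coord_add (x y : Cn B T n) (T₁ T'' : Finset ι) :
    coord (x + y) T₁ T'' = coord x T₁ T'' + coord y T₁ T'' := by
  unfold coord
  split_ifs <;> simp

@[simp]
theorem coord_zero (T₁ T'' : Finset ι) : coord (0 : Cn B T n) T₁ T'' = 0 := by
  unfold coord
  split_ifs <;> rfl

theorem coord_ddC (x : Cn B T n) {T₁ T'' : Finset ι} (h : IsCnIndex T (n + 1) T₁)
    (h'' : T'' ⊆ T₁) :
    coord (ddC B T n x) T₁ T'' = ∑ i ∈ T \ T₁, koszulSign T T₁ i • coord x (insert i T₁) T'' := by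
  rw [coord_of_isCnIndex _ h h'', ← sum_attach]
  simp only [ddC, AddMonoidHom.mk'_apply, Finset.sum_apply]
  refine sum_congr rfl fun i _ => ?_
  rw [coord_of_isCnIndex x (h.insert i.2) (h''.trans (subset_insert _ _))]
  rfl

end Coord

theorem ddC_comp_ddC (T : Finset ι) (n : ℕ) : (ddC B T (n + 1)).comp (ddC B T n) = 0 := by
  refine AddMonoidHom.ext fun x => ?_
  refine Cn.ext_coord (B := B) fun T₂ T'' h₂ h'' => ?_
  rw [AddMonoidHom.comp_apply, coord_ddC _ h₂ h'', AddMonoidHom.zero_apply, coord_zero]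
  calc _ = ∑ i ∈ T \ T₂, ∑ j ∈ (T \ T₂).erase i, (koszulSign T T₂ i *
          koszulSign T (insert i T₂) j) • coord x (insert j (insert i T₂)) T'' := by
        refine sum_congr rfl fun i hi => ?_
        rw [coord_ddC _ (h₂.insert hi) (h''.trans (subset_insert _ _)), sdiff_insert, smul_sum]
        simp only [mul_smul]
    _ = 0 := by
        refine sum_sum_erase_eq_zero_of_antisymm fun i hi j hj hij => ?_
        rw [mem_sdiff] at hi hj
        rw [insert_comm, koszulSign_mul_koszulSign_insert hj.1 hi.1 hj.2 hi.2 hij.symm, neg_smul]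

/-- The contracting homotopy `C^{n+1} → C^n`: coning off the least element `m` of `T ∖ T''`,
its component at `(T₁, T'')` is `±x` at `(T₁ ∖ {m}, T'')` when `m ∈ T₁`. -/
def contract {T : Finset ι} {n : ℕ} (x : Cn B T (n + 1)) : Cn B T n := fun T₁ T'' =>
  if h : (T \ T''.1).Nonempty then
    if (T \ T''.1).min' h ∈ T₁.1 then
      koszulSign T (T₁.1.erase ((T \ T''.1).min' h)) ((T \ T''.1).min' h) •
        coord x (T₁.1.erase ((T \ T''.1).min' h)) T''.1
    else 0
  else 0

section Contract

variable {T T₁ T'' : Finset ι} {n : ℕ} {m : ι}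

@[simp]
theorem contract_zero : contract (0 : Cn B T (n + 1)) = 0 := by
  funext T₁ T''
  simp [contract]

theorem coord_contract_of_mem (x : Cn B T (n + 1)) (h : IsCnIndex T n T₁) (h'' : T'' ⊆ T₁)
    (hmin : IsLeast ↑(T \ T'') m) (hm : m ∈ T₁) :
    coord (contract x) T₁ T'' = koszulSign T (T₁.erase m) m • coord x (T₁.erase m) T'' := by
  have hne : (T \ T'').Nonempty := ⟨m, hmin.1⟩
  obtain rfl : (T \ T'').min' hne = m := (isLeast_min' _ hne).unique hmin
  rw [coord_of_isCnIndex _ h h'', contract, dif_pos hne, if_pos hm]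

theorem coord_contract_of_notMem (x : Cn B T (n + 1)) (hmin : IsLeast ↑(T \ T'') m)
    (hm : m ∉ T₁) : coord (contract x) T₁ T'' = 0 := by
  have hne : (T \ T'').Nonempty := ⟨m, hmin.1⟩
  obtain rfl : (T \ T'').min' hne = m := (isLeast_min' _ hne).unique hmin
  unfold coord
  split_ifs
  · rw [contract, dif_pos hne, if_neg hm]
  · rfl

theorem coord_contract_ddC_of_mem (x : Cn B T n) (h : IsCnIndex T n T₁) (h'' : T'' ⊆ T₁)
    (hmin : IsLeast ↑(T \ T'') m) (hm : m ∈ T₁) :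
    coord (contract (ddC B T n x)) T₁ T'' = coord x T₁ T'' +
      ∑ i ∈ T \ T₁, (koszulSign T (T₁.erase m) m * koszulSign T (T₁.erase m) i) •
        coord x (insert i (T₁.erase m)) T'' := by
  obtain ⟨hmT, hmT''⟩ := mem_sdiff.mp (mem_coe.mp hmin.1)
  have hmT₁ : m ∉ T \ T₁ := fun h' => (mem_sdiff.mp h').2 hm
  rw [coord_contract_of_mem _ h h'' hmin hm,
    coord_ddC _ (h.erase hmT hm) (subset_erase.mpr ⟨h'', hmT''⟩), sdiff_erase hmT,
    sum_insert hmT₁, insert_erase hm, smul_add, koszulSign_smul_smul, smul_sum]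
  simp only [mul_smul]

theorem coord_ddC_contract_of_mem (x : Cn B T (n + 1)) (h : IsCnIndex T (n + 1) T₁)
    (h'' : T'' ⊆ T₁) (hmin : IsLeast ↑(T \ T'') m) (hm : m ∈ T₁) :
    coord (ddC B T n (contract x)) T₁ T'' =
      -∑ i ∈ T \ T₁, (koszulSign T (T₁.erase m) m * koszulSign T (T₁.erase m) i) •
        coord x (insert i (T₁.erase m)) T'' := by
  have hmT : m ∈ T := (mem_sdiff.mp (mem_coe.mp hmin.1)).1
  rw [coord_ddC _ h h'', ← sum_neg_distrib]
  refine sum_congr rfl fun i hi => ?_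
  obtain ⟨hiT, hiT₁⟩ := mem_sdiff.mp hi
  have him : i ≠ m := fun hc => hiT₁ (hc ▸ hm)
  have hT₁ : koszulSign T T₁ i = koszulSign T (insert m (T₁.erase m)) i := by
    rw [insert_erase hm]
  rw [coord_contract_of_mem _ (h.insert hi) (h''.trans (subset_insert _ _)) hmin
    (mem_insert_of_mem hm), erase_insert_of_ne him, smul_smul, hT₁,
    koszulSign_insert_mul_koszulSign_insert hiT hmT (fun hc => hiT₁ (mem_of_mem_erase hc))
      (notMem_erase m T₁) him, neg_smul]

theorem coord_ddC_contract_of_notMem (x : Cn B T (n + 1)) (h : IsCnIndex T (n + 1) T₁)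
    (h'' : T'' ⊆ T₁) (hmin : IsLeast ↑(T \ T'') m) (hm : m ∉ T₁) :
    coord (ddC B T n (contract x)) T₁ T'' = coord x T₁ T'' := by
  have hmT₁ : m ∈ T \ T₁ := mem_sdiff.mpr ⟨(mem_sdiff.mp (mem_coe.mp hmin.1)).1, hm⟩
  rw [coord_ddC _ h h'', sum_eq_single_of_mem m hmT₁ fun i _ him => ?_]
  · rw [coord_contract_of_mem _ (h.insert hmT₁) (h''.trans (subset_insert _ _)) hmin
      (mem_insert_self _ _), erase_insert hm, koszulSign_smul_smul]
  · rw [coord_contract_of_notMem _ hmin, smul_zero]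
    rw [mem_insert, not_or]
    exact ⟨Ne.symm him, hm⟩

end Contract

theorem ddC_contract_add_contract_ddC {T : Finset ι} {n : ℕ} (x : Cn B T (n + 1)) :
    ddC B T n (contract x) + contract (ddC B T (n + 1) x) = x := by
  refine Cn.ext_coord fun T₁ T'' h h'' => ?_
  have hne := h.sdiff_nonempty h''
  have hmin := isLeast_min' _ hne
  rw [coord_add]
  by_cases hm : (T \ T'').min' hne ∈ T₁
  · rw [coord_ddC_contract_of_mem x h h'' hmin hm, coord_contract_ddC_of_mem x h h'' hmin hm]
    abel
  · rw [coord_ddC_contract_of_notMem x h h'' hmin hm, coord_contract_of_notMem _ hmin hm, add_zero]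

theorem ddC_contract_of_ddC_eq_zero {T : Finset ι} {n : ℕ} {x : Cn B T (n + 1)}
    (hx : ddC B T (n + 1) x = 0) : ddC B T n (contract x) = x := by
  simpa [hx] using ddC_contract_add_contract_ddC x

theorem coord_univ_eq_zero_of_ddC_eq_zero {T T'' : Finset ι} {x : Cn B T 0}
    (hx : ddC B T 0 x = 0) (hT : ¬T ⊆ T'') : coord x univ T'' = 0 := by
  have hne : (T \ T'').Nonempty := Finset.sdiff_nonempty.mpr hT
  have key := coord_contract_ddC_of_mem x (isCnIndex_univ T) (subset_univ T'')
    (isLeast_min' _ hne) (mem_univ _)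
  rwa [hx, contract_zero, coord_zero,
    sdiff_eq_empty_iff_subset.mpr (subset_univ T), sum_empty, add_zero, eq_comm] at key

def ofSupersets (T : Finset ι) (f : ∀ T' : {T' : Finset ι // T ⊆ T'}, B T'.1) : Cn B T 0 :=
  fun _ T'' => if h : T ⊆ T''.1 then f ⟨T''.1, h⟩ else 0

theorem coord_ofSupersets {T T₁ T'' : Finset ι} (f : ∀ T' : {T' : Finset ι // T ⊆ T'}, B T'.1)
    (h : IsCnIndex T 0 T₁) (h'' : T'' ⊆ T₁) :
    coord (ofSupersets T f) T₁ T'' = if hT : T ⊆ T'' then f ⟨T'', hT⟩ else 0 :=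
  coord_of_isCnIndex _ h h''

theorem ddC_ofSupersets (T : Finset ι) (f : ∀ T' : {T' : Finset ι // T ⊆ T'}, B T'.1) :
    ddC B T 0 (ofSupersets T f) = 0 := by
  refine Cn.ext_coord fun T₁ T'' h h'' => ?_
  have hT : ¬T ⊆ T'' := Finset.sdiff_nonempty.mp (h.sdiff_nonempty h'')
  rw [coord_ddC _ h h'', coord_zero]
  refine sum_eq_zero fun i hi => ?_
  rw [coord_ofSupersets f (h.insert hi) (h''.trans (subset_insert _ _)), dif_neg hT, smul_zero]

def kerDdCZeroEquiv (T : Finset ι) :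
    (ddC B T 0).ker ≃+ (∀ T' : {T' : Finset ι // T ⊆ T'}, B T'.1) where
  toFun x T' := coord x.1 univ T'.1
  invFun f := ⟨ofSupersets T f, AddMonoidHom.mem_ker.mpr (ddC_ofSupersets T f)⟩
  left_inv x := Subtype.ext <| Cn.ext_coord fun T₁ T'' h h'' => by
    obtain rfl := h.eq_univ
    rw [coord_ofSupersets _ h h'']
    split_ifs with hT
    · rfl
    · exact (coord_univ_eq_zero_of_ddC_eq_zero x.2 hT).symm
  right_inv f := funext fun T' => by
    show coord (ofSupersets T f) univ T'.1 = f T'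
    rw [coord_ofSupersets f (isCnIndex_univ T) (subset_univ _), dif_pos T'.2]
  map_add' x y := funext fun _ => coord_add _ _ _ _

/-- **combinatorial acyclicity lemma.** For a family `{B_{T''}}` of
abelian groups indexed by the subsets of a finite totally ordered set, and a fixed
`T`, the complex `C•_{S,T}` with `C^n = ⊕_{|T'| = s-n, T' ⊇ S∖T} A_{T'}`
(`A_{T'} = ⊕_{T'' ⊆ T'} B_{T''}`) and the signed-projection differential is a cochain
complex with `H^n = 0` for `n ≠ 0` and `H^0 ≅ ⊕_{T' ⊇ T} B_{T'}`. -/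
theorem combinatorial_acyclicity (T : Finset ι) :
    (∀ n : ℕ, (ddC B T (n + 1)).comp (ddC B T n) = 0) ∧
      (∀ (n : ℕ) (x : Cn B T (n + 1)), ddC B T (n + 1) x = 0 →
        ∃ y : Cn B T n, ddC B T n y = x) ∧
      Nonempty (↥(ddC B T 0).ker ≃+ ((T' : {T' : Finset ι // T ⊆ T'}) → B T'.val)) :=
  ⟨ddC_comp_ddC T, fun _ _ hx => ⟨contract _, ddC_contract_of_ddC_eq_zero hx⟩,
    ⟨kerDdCZeroEquiv T⟩⟩
end
end
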